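/- Let D_n, E_n be sequences with D_k E_n − E_k D_n = H(λ_k − λ_n) for all k ≠ n. Then for pairwise distinct indices i, j, k, n, the identity (D_n − D_j)(E_i − E_k) = (D_i − D_k)(E_n − E_j) holds. -/

import Mathlib

theorem stmt_3_general (H : ℂ) (lam : ℤ → ℝ) (D E : ℤ → ℂ)
    (h : ∀ k n : ℤ, k ≠ n → D k * E n - E k * D n = H * ((lam k : ℂ) - (lam n : ℂ)))
    (i j k n : ℤ) (hij : i ≠ j) (hin : i ≠ n)
    (hjk : j ≠ k) (hkn : k ≠ n) :
    (D n - D j) * (E i - E k) = (D i - D k) * (E n - E j) := by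
  -- Sum the relations along the cycle i → j → k → n → i: the λ-terms telescope to zero.
  linear_combination h i j hij + h j k hjk + h k n hkn + h n i hin.symm

/-- From the relations `D k * E n - E k * D n = H * (lam k - lam n)` (k ≠ n)
one gets, for pairwise distinct indices `i, j, k, n`, the identity
`(D n - D j) * (E i - E k) = (D i - D k) * (E n - E j)`. -/
theorem stmt_3 (H : ℂ) (lam : ℤ → ℝ) (D E : ℤ → ℂ)
    (h : ∀ k n : ℤ, k ≠ n → D k * E n - E k * D n = H * ((lam k : ℂ) - (lam n : ℂ)))
    (i j k n : ℤ) (hij : i ≠ j) (hik : i ≠ k) (hin : i ≠ n)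
    (hjk : j ≠ k) (hjn : j ≠ n) (hkn : k ≠ n) :
    (D n - D j) * (E i - E k) = (D i - D k) * (E n - E j) :=
  stmt_3_general H lam D E h i j k n hij hin hjk hkn
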